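/- For every integer m ≥ 1, the set of m-ultra numbers is uncountable. -/

import Mathlib

open Polynomial

/-- The primitive minimal polynomial over ℤ of a real number. -/
noncomputable def intMinpoly (α : ℝ) : Polynomial ℤ :=
  (IsLocalization.integerNormalization (nonZeroDivisors ℤ) (minpoly ℚ α)).primPart

/-- The height of an algebraic number: the maximum of the absolute values of the
coefficients of its primitive minimal polynomial over ℤ. -/
noncomputable def algHeight (α : ℝ) : ℕ :=
  (intMinpoly α).support.sup fun i => ((intMinpoly α).coeff i).natAbs

/-- `α` is a real algebraic number of degree exactly `m`. -/
def DegreeExactly (m : ℕ) (α : ℝ) : Prop :=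
  IsAlgebraic ℚ α ∧ (minpoly ℚ α).natDegree = m

/-- `exp^[3](x) = e^(e^(e^x))`. -/
noncomputable def expCube (x : ℝ) : ℝ := Real.exp (Real.exp (Real.exp x))

/-- `ξ` is an `m`-ultra number: there is a sequence `(α_n)_{n ≥ 1}` of pairwise distinct
real algebraic numbers of degree exactly `m` with
`0 < |ξ - α_n| < (exp^[3](H(α_n)))^{-n}` for all `n ≥ 1`. Here `a k` plays the
role of `α_{k+1}`. -/
def IsMUltra (m : ℕ) (ξ : ℝ) : Prop :=
  ∃ a : ℕ → ℝ, Function.Injective a ∧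
    ∀ n : ℕ, DegreeExactly m (a n) ∧ 0 < |ξ - a n| ∧
      |ξ - a n| < (expCube (algHeight (a n)))⁻¹ ^ (n + 1)

/-- A function `f : ℝ → ℝ` is transcendental if the only complex two-variable polynomial
`P` with `P (x, f x) = 0` for all real `x` is the zero polynomial. -/
def TranscendentalFun (f : ℝ → ℝ) : Prop :=
  ∀ P : MvPolynomial (Fin 2) ℂ,
    (∀ x : ℝ, MvPolynomial.eval ![(x : ℂ), (f x : ℂ)] P = 0) → P = 0


/-!
A Baire category argument. For each `N`, the balls of radius `exp^[3](H(α))^{-N}` around the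
real algebraic numbers `α` of degree `m` form an open dense set, because these numbers are dense
(the rational translates of `2^{1/m}` already are). The intersection over `N` is a dense Gδ subset
of `ℝ`, hence uncountable. Each of its points outside the countable set of degree-`m` algebraic
numbers is `m`-ultra: it has approximants to every exponent `N`, and these cannot all lie in a
finite set, since a finite set avoiding `ξ` stays at positive distance from it.
-/

open Function Metric

theorem exists_injective_forall_mem_of_antitone {α : Type*} {s : ℕ → Set α} (hs : Antitone s)
    (hinf : ∀ n, (s n).Infinite) : ∃ f : ℕ → α, Injective f ∧ ∀ n, f n ∈ s n := by
  classical
  -- Choose pairs `(k, a)` with `a ∈ s k`, the `k` strictly increasing and the `a` distinct.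
  obtain ⟨g, hgs, hg⟩ := exists_seq_of_forall_finset_exists (fun p : ℕ × α => p.2 ∈ s p.1)
    (fun p q => p.1 < q.1 ∧ p.2 ≠ q.2) fun t _ => by
      obtain ⟨a, has, hat⟩ :=
        (hinf (t.sup Prod.fst + 1)).exists_notMem_finset (t.image Prod.snd)
      exact ⟨(t.sup Prod.fst + 1, a), has, fun p hp =>
        ⟨Nat.lt_succ_of_le (Finset.le_sup hp), fun h => hat (Finset.mem_image.2 ⟨p, hp, h⟩)⟩⟩
  have hmono : StrictMono fun n => (g n).1 := fun m n h => (hg m n h).1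
  refine ⟨fun n => (g n).2, fun m n h => ?_, fun n => hs (hmono.id_le n) (hgs n)⟩
  by_contra hne
  rcases lt_or_gt_of_ne hne with hmn | hnm
  · exact (hg m n hmn).2 h
  · exact (hg n m hnm).2 h.symm

theorem IsGδ.not_countable_of_dense {E : Type*} [NormedAddCommGroup E] [NormedSpace ℝ E]
    [CompleteSpace E] [Nontrivial E] {s : Set E} (hs : IsGδ s) (hd : Dense s) :
    ¬ s.Countable := fun hc => by
  simpa using (hd.inter_of_Gδ hs hc.isGδ_compl (hc.dense_compl ℝ)).nonempty

section Approximation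

variable {X : Type*} [MetricSpace X] {D : Set X} {ρ : X → ℝ} {c : ℝ}

theorem exists_injective_dist_lt_pow (hρ : ∀ α, 0 ≤ ρ α) (hρc : ∀ α, ρ α ≤ c) (hc : c < 1)
    {ξ : X} (hξD : ξ ∉ D) (hξ : ∀ N : ℕ, ∃ α ∈ D, dist ξ α < ρ α ^ N) :
    ∃ a : ℕ → X, Injective a ∧ ∀ n, a n ∈ D ∧ dist ξ (a n) < ρ (a n) ^ (n + 1) := by
  have hc0 : 0 ≤ c := (hρ ξ).trans (hρc ξ)
  set s : ℕ → Set X := fun n => {α | α ∈ D ∧ dist ξ α < ρ α ^ (n + 1)}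
  have hanti : Antitone s := fun n k hnk α ⟨hαD, hα⟩ =>
    ⟨hαD, hα.trans_le (pow_le_pow_of_le_one (hρ α) ((hρc α).trans hc.le) (by omega))⟩
  suffices hinf : ∀ n, (s n).Infinite from exists_injective_forall_mem_of_antitone hanti hinf
  intro n hfin
  obtain ⟨ε, hε, hball⟩ := Metric.mem_nhds_iff.1
    (hfin.isClosed.isOpen_compl.mem_nhds fun hξs => hξD hξs.1)
  obtain ⟨N, hN⟩ := exists_pow_lt_of_lt_one hε hc
  obtain ⟨α, hαD, hα⟩ := hξ (N + (n + 1))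
  have hρα : ρ α ^ (N + (n + 1)) ≤ c ^ N :=
    (pow_le_pow_left₀ (hρ α) (hρc α) _).trans (pow_le_pow_of_le_one hc0 hc.le (by omega))
  exact hball (mem_ball'.2 (hα.trans_le hρα |>.trans hN)) (hanti (Nat.le_add_left n N) ⟨hαD, hα⟩)

end Approximation

theorem not_countable_setOf_exists_injective_dist_lt_pow {E : Type*} [NormedAddCommGroup E]
    [NormedSpace ℝ E] [CompleteSpace E] [Nontrivial E] {D : Set E} {ρ : E → ℝ} {c : ℝ}
    (hDc : D.Countable) (hDd : Dense D) (hρ : ∀ α, 0 < ρ α) (hρc : ∀ α, ρ α ≤ c) (hc : c < 1) :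
    ¬ {ξ | ∃ a : ℕ → E, Injective a ∧
        ∀ n, a n ∈ D ∧ 0 < dist ξ (a n) ∧ dist ξ (a n) < ρ (a n) ^ (n + 1)}.Countable := by
  set U : ℕ → Set E := fun N => ⋃ α ∈ D, ball α (ρ α ^ N)
  have hU : ∀ N, IsOpen (U N) := fun N => isOpen_biUnion fun α _ => isOpen_ball
  have hUd : ∀ N, Dense (U N) := fun N =>
    hDd.mono fun α hα => Set.mem_biUnion hα (mem_ball_self (pow_pos (hρ α) N))
  intro hS
  refine (IsGδ.iInter_of_isOpen hU).not_countable_of_dense (dense_iInter_of_isOpen_nat hU hUd)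
    ((hS.union hDc).mono fun ξ hξ => ?_)
  by_cases hξD : ξ ∈ D
  · exact Or.inr hξD
  simp only [U, Set.mem_iInter, Set.mem_iUnion, mem_ball, exists_prop] at hξ
  obtain ⟨a, ha, haD⟩ := exists_injective_dist_lt_pow (fun α => (hρ α).le) hρc hc hξD hξ
  exact Or.inl ⟨a, ha, fun n => ⟨(haD n).1, dist_pos.2 fun h => hξD (h ▸ (haD n).1), (haD n).2⟩⟩

theorem irreducible_X_pow_sub_C_of_prime {p : ℕ} (hp : p.Prime) {m : ℕ} (hm : m ≠ 0) :
    Irreducible (X ^ m - C (p : ℚ)) := by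
  have hmonic : (X ^ m - C (p : ℤ)).Monic := monic_X_pow_sub_C _ hm
  have hdeg : (X ^ m - C (p : ℤ)).natDegree = m := natDegree_X_pow_sub_C
  have hprime : (Ideal.span {(p : ℤ)}).IsPrime :=
    (Ideal.span_singleton_prime (by exact_mod_cast hp.ne_zero)).2 (Nat.prime_iff_prime_int.1 hp)
  have heis : (X ^ m - C (p : ℤ)).IsEisensteinAt (Ideal.span {(p : ℤ)}) := by
    refine hmonic.isEisensteinAt_of_mem_of_notMem hprime.ne_top (fun {n} hn => ?_) ?_
    · rw [hdeg] at hn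
      rw [coeff_sub, coeff_X_pow, coeff_C, if_neg hn.ne]
      split_ifs <;> simp
    · rw [coeff_sub, coeff_X_pow, if_neg (Ne.symm hm), coeff_C_zero, Ideal.span_singleton_pow,
        Ideal.mem_span_singleton, zero_sub, dvd_neg, sq]
      intro h
      have := Nat.le_of_dvd hp.pos (by exact_mod_cast h : p * p ∣ p)
      nlinarith [hp.two_le]
  have := (IsPrimitive.Int.irreducible_iff_irreducible_map_cast hmonic.isPrimitive).1
    (heis.irreducible hprime hmonic.isPrimitive (by omega))
  simpa using this

theorem exists_degreeExactly {m : ℕ} (hm : m ≠ 0) : ∃ θ : ℝ, DegreeExactly m θ := by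
  set θ : ℝ := 2 ^ (m⁻¹ : ℝ)
  have hroot : aeval θ (X ^ m - C ((2 : ℕ) : ℚ)) = 0 := by
    simp [θ, Real.rpow_inv_natCast_pow (by norm_num : (0 : ℝ) ≤ 2) hm]
  have hmonic : (X ^ m - C ((2 : ℕ) : ℚ)).Monic := monic_X_pow_sub_C _ hm
  have hmin : minpoly ℚ θ = X ^ m - C ((2 : ℕ) : ℚ) :=
    (minpoly.eq_of_irreducible_of_monic (irreducible_X_pow_sub_C_of_prime Nat.prime_two hm)
      hroot hmonic).symm
  exact ⟨θ, ⟨_, hmonic.ne_zero, hroot⟩, by rw [hmin, natDegree_X_pow_sub_C]⟩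

theorem DegreeExactly.add_rat {m : ℕ} {θ : ℝ} (h : DegreeExactly m θ) (q : ℚ) :
    DegreeExactly m (θ + q) := by
  rw [← eq_ratCast (algebraMap ℚ ℝ) q]
  refine ⟨(h.1.isIntegral.add isIntegral_algebraMap).isAlgebraic, ?_⟩
  rw [minpoly.add_algebraMap, natDegree_comp, natDegree_X_sub_C, mul_one, h.2]

theorem dense_setOf_degreeExactly {m : ℕ} (hm : m ≠ 0) : Dense {α : ℝ | DegreeExactly m α} := by
  obtain ⟨θ, hθ⟩ := exists_degreeExactly hm
  have hdense : DenseRange fun q : ℚ => θ + q :=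
    (Homeomorph.addLeft θ).surjective.denseRange.comp Rat.denseRange_cast (continuous_const_add θ)
  exact hdense.mono (Set.range_subset_iff.2 hθ.add_rat)

theorem countable_setOf_degreeExactly (m : ℕ) : {α : ℝ | DegreeExactly m α}.Countable :=
  (Algebraic.countable ℚ ℝ).mono fun _ h => h.1

theorem two_le_expCube (x : ℝ) : 2 ≤ expCube x := by
  have h := Real.add_one_le_exp (Real.exp (Real.exp x))
  have := Real.one_le_exp (Real.exp_pos x).le
  rw [expCube]
  linarith

/-- The set of `m`-ultra numbers is uncountable. -/
theorem stmt_4 (m : ℕ) (hm : 1 ≤ m) :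
    ¬ Set.Countable {ξ : ℝ | IsMUltra m ξ} := by
  intro hS
  refine not_countable_setOf_exists_injective_dist_lt_pow (countable_setOf_degreeExactly m)
    (dense_setOf_degreeExactly (Nat.one_le_iff_ne_zero.1 hm))
    (ρ := fun α => (expCube (algHeight α))⁻¹) (c := 2⁻¹)
    (fun α => inv_pos.2 (zero_lt_two.trans_le (two_le_expCube _)))
    (fun α => inv_anti₀ zero_lt_two (two_le_expCube _)) (by norm_num) (hS.mono ?_)
  rintro ξ ⟨a, ha, h⟩
  exact ⟨a, ha, fun n => by simpa only [Real.dist_eq, Set.mem_ofPred_eq] using h n⟩
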